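/- The group commutator induces a well-defined biadditive bracket gr_m(G) × gr_n(G) → gr_{m+n}(G), sending (aΓ_{m+1}, bΓ_{n+1}) to [a,b]Γ_{m+n+1}, and the direct sum gr(G) = ⊕_{n≥1} gr_n(G) equipped with this bracket is a graded Lie ring (the bracket is bilinear, alternating, and satisfies the Jacobi identity). -/

import Mathlib

open scoped commutatorElement

/-- `gr G n` is the paper's `gr_{n+1}(G) = Γ_{n+1}(G)/Γ_{n+2}(G)`, i.e. the quotient of
`lowerCentralSeries G n` by `lowerCentralSeries G (n+1)` (viewed inside it). -/
abbrev grLCS (G : Type*) [Group G] (n : ℕ) :=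
  ((⊤ : Subgroup G).lowerCentralSeries n) ⧸ (((⊤ : Subgroup G).lowerCentralSeries (n + 1)).subgroupOf ((⊤ : Subgroup G).lowerCentralSeries n))

/-- The class of an element `a ∈ Γ_{n+1}(G)` in `gr G n`. -/
def grLCSMk {G : Type*} [Group G] {n : ℕ} (a : G) (h : a ∈ (⊤ : Subgroup G).lowerCentralSeries n) :
    grLCS G n := QuotientGroup.mk ⟨a, h⟩

/-- Transport along an equality of degrees. -/
def grLCSCast {G : Type*} [Group G] {i j : ℕ} (h : i = j) : grLCS G i → grLCS G j :=
  fun x => h ▸ x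

/-! The bracket is induced by the group commutator, and every identity is checked in a quotient
`G ⧸ Γ_K`. There, elements of `Γ_i` and `Γ_j` commute as soon as `K ≤ i + j + 1`, because
`⁅Γ_i, Γ_j⁆ ≤ Γ_{i+j+1}` (induction on `j` via the three subgroups lemma). Modulo such commutators
the expansion formulas for `⁅a * a', b⁆` and `⁅a, b * b'⁆` become bilinearity, and the Hall–Witt
identity becomes the Jacobi identity. -/

open Subgroup QuotientGroup

section CommutatorIdentities

variable {G : Type*} [Group G]

theorem commutatorElement_mul_right_of_commute {x y z : G} (h : Commute x z) :
    ⁅x, y * z⁆ = ⁅x, y⁆ := by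
  rw [commutatorElement_mul_right_eq_mul_conj, commutatorElement_eq_one_iff_commute.mpr h, mul_one,
    mul_inv_cancel_right]

theorem commutatorElement_mul_left_of_commute {x y z : G} (h : Commute x z) :
    ⁅y * x, z⁆ = ⁅y, z⁆ := by
  rw [commutatorElement_mul_left_eq_conj_mul, commutatorElement_eq_one_iff_commute.mpr h, mul_one,
    mul_inv_cancel, one_mul]

theorem QuotientGroup.mk_commutatorElement (N : Subgroup G) [N.Normal] (a b : G) :
    ((⁅a, b⁆ : G) : G ⧸ N) = ⁅(a : G ⧸ N), (b : G ⧸ N)⁆ :=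
  map_commutatorElement (QuotientGroup.mk' N) a b

theorem Subgroup.commutator_commutator_le_of_rotate {H₁ H₂ H₃ N : Subgroup G} [N.Normal]
    (h₁ : ⁅⁅H₂, H₃⁆, H₁⁆ ≤ N) (h₂ : ⁅⁅H₃, H₁⁆, H₂⁆ ≤ N) : ⁅⁅H₁, H₂⁆, H₃⁆ ≤ N := by
  have map_eq_bot_iff {A B C : Subgroup G} :
      ⁅⁅A, B⁆, C⁆ ≤ N ↔ ⁅⁅A.map (mk' N), B.map (mk' N)⁆, C.map (mk' N)⁆ = ⊥ := by
    rw [← map_commutator, ← map_commutator, map_eq_bot_iff, QuotientGroup.ker_mk']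
  exact map_eq_bot_iff.mpr
    (commutator_commutator_eq_bot_of_rotate (map_eq_bot_iff.mp h₁) (map_eq_bot_iff.mp h₂))

end CommutatorIdentities

section LowerCentralSeries

variable {G : Type*} [Group G]

local notation "γ" => Subgroup.lowerCentralSeries (⊤ : Subgroup G)

theorem Subgroup.commutator_lowerCentralSeries_le (i j : ℕ) : ⁅γ i, γ j⁆ ≤ γ (i + j + 1) := by
  induction j generalizing i with
  | zero => exact le_rfl
  | succ j ih =>
    rw [lowerCentralSeries_succ, commutator_comm]
    apply commutator_commutator_le_of_rotate
    · rw [commutator_comm ⊤, ← lowerCentralSeries_succ, show i + (j + 1) = i + 1 + j by omega]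
      exact ih (i + 1)
    · rw [show i + (j + 1) + 1 = i + j + 1 + 1 by omega, lowerCentralSeries_succ]
      exact commutator_mono (ih i) le_rfl

theorem commutatorElement_mem_lowerCentralSeries {i j : ℕ} {a b : G} (ha : a ∈ γ i)
    (hb : b ∈ γ j) : ⁅a, b⁆ ∈ γ (i + j + 1) :=
  commutator_lowerCentralSeries_le i j (commutator_mem_commutator ha hb)

theorem commute_mk_lowerCentralSeries {K i j : ℕ} {a b : G} (ha : a ∈ γ i) (hb : b ∈ γ j)
    (hK : K ≤ i + j + 1) : Commute (a : G ⧸ γ K) (b : G ⧸ γ K) := by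
  rw [← commutatorElement_eq_one_iff_commute, ← mk_commutatorElement, QuotientGroup.eq_one_iff]
  exact Subgroup.lowerCentralSeries_antitone _ hK (commutatorElement_mem_lowerCentralSeries ha hb)

theorem mk_commutatorElement_eq_of_mk_eq {K m n : ℕ} {a a' b b' : G} (ha : a ∈ γ m)
    (hb' : b' ∈ γ n) (haa' : (a : G ⧸ γ (m + 1)) = a') (hbb' : (b : G ⧸ γ (n + 1)) = b')
    (hK : K ≤ m + n + 2) : ((⁅a, b⁆ : G) : G ⧸ γ K) = ((⁅a', b'⁆ : G) : G ⧸ γ K) := by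
  rw [QuotientGroup.eq] at haa' hbb'
  have ha' : (a' : G ⧸ γ K) = a * (a⁻¹ * a' : G) := by rw [← mk_mul, mul_inv_cancel_left]
  have hb : (b' : G ⧸ γ K) = b * (b⁻¹ * b' : G) := by rw [← mk_mul, mul_inv_cancel_left]
  rw [mk_commutatorElement, mk_commutatorElement, ha',
    commutatorElement_mul_left_of_commute (commute_mk_lowerCentralSeries haa' hb' (by omega)), hb,
    commutatorElement_mul_right_of_commute (commute_mk_lowerCentralSeries ha hbb' (by omega))]

theorem mk_commutatorElement_mul_left {K m n : ℕ} {a a' b : G} (ha : a ∈ γ m) (ha' : a' ∈ γ m)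
    (hb : b ∈ γ n) (hK : K ≤ m + n + 2) :
    ((⁅a * a', b⁆ : G) : G ⧸ γ K) = ((⁅a, b⁆ * ⁅a', b⁆ : G) : G ⧸ γ K) := by
  have hconj := commute_mk_lowerCentralSeries (K := K) ha
    (commutatorElement_mem_lowerCentralSeries ha' hb) (by omega)
  have hcomm := commute_mk_lowerCentralSeries (K := K)
    (commutatorElement_mem_lowerCentralSeries ha' hb)
    (commutatorElement_mem_lowerCentralSeries ha hb) (by omega)
  rw [commutatorElement_mul_left_eq_conj_mul]
  simp only [mk_mul, mk_inv]
  rw [hconj.mul_inv_cancel, hcomm.eq]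

theorem mk_commutatorElement_mul_right {K m n : ℕ} {a b b' : G} (ha : a ∈ γ m) (hb : b ∈ γ n)
    (hb' : b' ∈ γ n) (hK : K ≤ m + n + 2) :
    ((⁅a, b * b'⁆ : G) : G ⧸ γ K) = ((⁅a, b⁆ * ⁅a, b'⁆ : G) : G ⧸ γ K) := by
  have hconj := commute_mk_lowerCentralSeries (K := K) hb
    (commutatorElement_mem_lowerCentralSeries ha hb') (by omega)
  rw [commutatorElement_mul_right_eq_mul_conj]
  simp only [mk_mul, mk_inv, mul_assoc, hconj.mul_inv_cancel_assoc]

theorem mk_commutatorElement_conj_right {K i j k : ℕ} {x b c : G} (hx : x ∈ γ i) (hb : b ∈ γ j)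
    (hc : c ∈ γ k) (hK : K ≤ i + j + k + 2) :
    ((⁅x, b * c * b⁻¹⁆ : G) : G ⧸ γ K) = ((⁅x, c⁆ : G) : G ⧸ γ K) := by
  have hcomm := commute_mk_lowerCentralSeries (K := K) hx
    (commutatorElement_mem_lowerCentralSeries (inv_mem hc) hb) (by omega)
  rw [show b * c * b⁻¹ = c * ⁅c⁻¹, b⁆ by group, mk_commutatorElement, mk_mul,
    commutatorElement_mul_right_of_commute hcomm, mk_commutatorElement]

theorem mk_commutatorElement_jacobi {K m n p : ℕ} {a b c : G} (ha : a ∈ γ m) (hb : b ∈ γ n)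
    (hc : c ∈ γ p) (hK : K ≤ m + n + p + 3) :
    ((⁅⁅a, b⁆, c⁆ * ⁅⁅b, c⁆, a⁆ * ⁅⁅c, a⁆, b⁆ : G) : G ⧸ γ K) = 1 := by
  rw [← mk_one, ← commutatorElement_commutatorElement_conj_mul a b c, mk_mul, mk_mul, mk_mul,
    mk_mul, mk_commutatorElement_conj_right (commutatorElement_mem_lowerCentralSeries ha hb) hb hc
      (by omega),
    mk_commutatorElement_conj_right (commutatorElement_mem_lowerCentralSeries hb hc) hc ha
      (by omega),
    mk_commutatorElement_conj_right (commutatorElement_mem_lowerCentralSeries hc ha) ha hb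
      (by omega)]

theorem exists_grLCSMk_eq {k : ℕ} (x : grLCS G k) : ∃ a, ∃ ha : a ∈ γ k, grLCSMk a ha = x := by
  induction x using QuotientGroup.induction_on with
  | H a => exact ⟨a, a.2, rfl⟩

theorem grLCSMk_eq_grLCSMk_iff {k : ℕ} {a b : G} (ha : a ∈ γ k) (hb : b ∈ γ k) :
    grLCSMk a ha = grLCSMk b hb ↔ (a : G ⧸ γ (k + 1)) = b := by
  rw [grLCSMk, grLCSMk, QuotientGroup.eq, mem_subgroupOf, QuotientGroup.eq]
  rfl

theorem grLCSMk_eq_one_iff {k : ℕ} {a : G} (ha : a ∈ γ k) :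
    grLCSMk a ha = 1 ↔ (a : G ⧸ γ (k + 1)) = 1 := by
  rw [grLCSMk, QuotientGroup.eq_one_iff, mem_subgroupOf, QuotientGroup.eq_one_iff]

theorem grLCSMk_mul {k : ℕ} {a b : G} (ha : a ∈ γ k) (hb : b ∈ γ k) :
    grLCSMk a ha * grLCSMk b hb = grLCSMk (a * b) (mul_mem ha hb) :=
  rfl

theorem grLCSCast_grLCSMk {i j : ℕ} (h : i = j) {a : G} (ha : a ∈ γ i) :
    grLCSCast h (grLCSMk a ha) = grLCSMk a (h ▸ ha) := by
  subst h
  rfl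

def grBracket (m n : ℕ) (x : grLCS G m) (y : grLCS G n) : grLCS G (m + n + 1) :=
  Quotient.liftOn₂ x y
    (fun a b => grLCSMk ⁅(a : G), (b : G)⁆ (commutatorElement_mem_lowerCentralSeries a.2 b.2))
    (fun a b a' b' haa' hbb' => (grLCSMk_eq_grLCSMk_iff _ _).mpr <|
      mk_commutatorElement_eq_of_mk_eq a.2 b'.2
        ((grLCSMk_eq_grLCSMk_iff a.2 a'.2).mp (Quotient.sound haa'))
        ((grLCSMk_eq_grLCSMk_iff b.2 b'.2).mp (Quotient.sound hbb')) (by omega))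

theorem grBracket_grLCSMk {m n : ℕ} {a b : G} (ha : a ∈ γ m) (hb : b ∈ γ n) :
    grBracket m n (grLCSMk a ha) (grLCSMk b hb) =
      grLCSMk ⁅a, b⁆ (commutatorElement_mem_lowerCentralSeries ha hb) :=
  rfl

theorem grBracket_mul_left (m n : ℕ) (x x' : grLCS G m) (y : grLCS G n) :
    grBracket m n (x * x') y = grBracket m n x y * grBracket m n x' y := by
  obtain ⟨a, ha, rfl⟩ := exists_grLCSMk_eq x
  obtain ⟨a', ha', rfl⟩ := exists_grLCSMk_eq x'
  obtain ⟨b, hb, rfl⟩ := exists_grLCSMk_eq y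
  simp only [grLCSMk_mul, grBracket_grLCSMk, grLCSMk_eq_grLCSMk_iff]
  exact mk_commutatorElement_mul_left ha ha' hb (by omega)

theorem grBracket_mul_right (m n : ℕ) (x : grLCS G m) (y y' : grLCS G n) :
    grBracket m n x (y * y') = grBracket m n x y * grBracket m n x y' := by
  obtain ⟨a, ha, rfl⟩ := exists_grLCSMk_eq x
  obtain ⟨b, hb, rfl⟩ := exists_grLCSMk_eq y
  obtain ⟨b', hb', rfl⟩ := exists_grLCSMk_eq y'
  simp only [grLCSMk_mul, grBracket_grLCSMk, grLCSMk_eq_grLCSMk_iff]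
  exact mk_commutatorElement_mul_right ha hb hb' (by omega)

theorem grBracket_self (n : ℕ) (x : grLCS G n) : grBracket n n x x = 1 := by
  obtain ⟨a, ha, rfl⟩ := exists_grLCSMk_eq x
  simp only [grBracket_grLCSMk, grLCSMk_eq_one_iff, commutatorElement_self, mk_one]

theorem grBracket_jacobi (m n p : ℕ) (x : grLCS G m) (y : grLCS G n) (z : grLCS G p) :
    grBracket (m + n + 1) p (grBracket m n x y) z *
      grLCSCast (by ring) (grBracket (n + p + 1) m (grBracket n p y z) x) *
      grLCSCast (by ring) (grBracket (p + m + 1) n (grBracket p m z x) y) = 1 := by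
  obtain ⟨a, ha, rfl⟩ := exists_grLCSMk_eq x
  obtain ⟨b, hb, rfl⟩ := exists_grLCSMk_eq y
  obtain ⟨c, hc, rfl⟩ := exists_grLCSMk_eq z
  simp only [grBracket_grLCSMk, grLCSCast_grLCSMk, grLCSMk_mul, grLCSMk_eq_one_iff]
  exact mk_commutatorElement_jacobi ha hb hc (by omega)

end LowerCentralSeries

/-- The group commutator induces a well-defined biadditive bracket
`gr_m(G) × gr_n(G) → gr_{m+n}(G)` sending `(aΓ_{m+1}, bΓ_{n+1})` to `[a,b]Γ_{m+n+1}`, and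
the direct sum `gr(G) = ⊕_{n ≥ 1} gr_n(G)` with this bracket is a graded Lie ring: the
bracket is bilinear (written multiplicatively here), alternating, and satisfies the Jacobi
identity.  With Lean's indexing, the paper's `gr_{m+1} × gr_{n+1} → gr_{m+n+2}` is
`grLCS G m → grLCS G n → grLCS G (m+n+1)`. -/
theorem gr_graded_lie_ring (G : Type*) [Group G] :
    ∃ B : ∀ m n : ℕ, grLCS G m → grLCS G n → grLCS G (m + n + 1),
      (∀ (m n : ℕ) (a b : G) (ha : a ∈ (⊤ : Subgroup G).lowerCentralSeries m)
          (hb : b ∈ (⊤ : Subgroup G).lowerCentralSeries n) (hab : ⁅a, b⁆ ∈ (⊤ : Subgroup G).lowerCentralSeries (m + n + 1)),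
          B m n (grLCSMk a ha) (grLCSMk b hb) = grLCSMk ⁅a, b⁆ hab) ∧
      (∀ (m n : ℕ) (x x' : grLCS G m) (y : grLCS G n),
          B m n (x * x') y = B m n x y * B m n x' y) ∧
      (∀ (m n : ℕ) (x : grLCS G m) (y y' : grLCS G n),
          B m n x (y * y') = B m n x y * B m n x y') ∧
      (∀ (n : ℕ) (x : grLCS G n), B n n x x = 1) ∧
      (∀ (m n p : ℕ) (x : grLCS G m) (y : grLCS G n) (z : grLCS G p),
          B (m + n + 1) p (B m n x y) z *
            grLCSCast (by omega) (B (n + p + 1) m (B n p y z) x) *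
            grLCSCast (by omega) (B (p + m + 1) n (B p m z x) y) = 1) :=
  ⟨grBracket, fun _ _ _ _ ha hb _ => grBracket_grLCSMk ha hb, grBracket_mul_left,
    grBracket_mul_right, grBracket_self, grBracket_jacobi⟩
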